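/- Fix a circular sequence s over {A,C,G,T} and k ≥ 2. Every circular sequence x with C_k(x) = C_k(s) corresponds to an Eulerian cycle of the k-mer graph B_k(s), every Eulerian cycle of B_k(s) spells a circular sequence x with C_k(x) = C_k(s), and two Eulerian cycles of B_k(s) that are distinct up to edge multiplicities spell distinct circular sequences. Consequently the number of circular sequences x (up to cyclic shift) with C_k(x) = C_k(s) equals ec(B_k(s)), the number of Eulerian cycles of B_k(s) distinct up to edge multiplicity. -/

import Mathlib

/-!
Formalization of definitions from "Partial DNA Assembly: A Rate-Distortion
Perspective" (Shomorony, Kamath, Xia, Courtade, Tse).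
-/

open Relation

namespace DNAAssembly

noncomputable section

/-- The DNA alphabet `Σ = {A,C,G,T}`. -/
abbrev Sym : Type := Fin 4

/-- Strings over the DNA alphabet. -/
abbrev Str : Type := List Sym

/-- The cyclic substring `s[t : t+ℓ-1]` of a circular sequence `s` of length `G`. -/
def substr {G : ℕ} (s : ZMod G → Sym) (t : ZMod G) (ℓ : ℕ) : Str :=
  (List.range ℓ).map (fun j : ℕ => s (t + (j : ZMod G)))

theorem substr_length {G : ℕ} (s : ZMod G → Sym) (t : ZMod G) (ℓ : ℕ) :
    (substr s t ℓ).length = ℓ := by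
  rw [substr, List.length_map, List.length_range]

theorem substr_getElem {G : ℕ} (s : ZMod G → Sym) (t : ZMod G) (ℓ i : ℕ)
    (h : i < (substr s t ℓ).length) :
    (substr s t ℓ)[i] = s (t + (i : ZMod G)) := by
  simp only [substr, List.getElem_map, List.getElem_range]

theorem substr_take {G : ℕ} (s : ZMod G → Sym) (t : ZMod G) (k : ℕ) :
    (substr s t k).take (k - 1) = substr s t (k - 1) := by
  rw [substr, substr, ← List.map_take, List.take_range, Nat.min_eq_left (Nat.sub_le k 1)]

theorem substr_drop {G : ℕ} (s : ZMod G → Sym) (t : ZMod G) (k : ℕ) :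
    (substr s t k).drop 1 = substr s (t + 1) (k - 1) := by
  apply List.ext_getElem
  · rw [List.length_drop, substr_length, substr_length]
  · intro i h1 h2
    rw [List.getElem_drop, substr_getElem, substr_getElem]
    congr 1
    push_cast
    ring

/-- `t₁, t₂` are the positions of the two copies of a (maximal) repeat of
length `ℓ` in the circular sequence `s`. -/
def IsRepeatAt {G : ℕ} (s : ZMod G → Sym) (ℓ : ℕ) (t₁ t₂ : ZMod G) : Prop :=
  t₁ ≠ t₂ ∧ substr s t₁ ℓ = substr s t₂ ℓ ∧
    s (t₁ - 1) ≠ s (t₂ - 1) ∧ s (t₁ + (ℓ : ZMod G)) ≠ s (t₂ + (ℓ : ZMod G))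

/-- `t₁, t₂, t₃` are the positions of the three copies of a (maximal) triple repeat of
length `ℓ` in `s`: the three copies agree and they cannot all be extended in a
common direction. -/
def IsTripleRepeatAt {G : ℕ} (s : ZMod G → Sym) (ℓ : ℕ) (t₁ t₂ t₃ : ZMod G) : Prop :=
  t₁ ≠ t₂ ∧ t₁ ≠ t₃ ∧ t₂ ≠ t₃ ∧
  substr s t₁ ℓ = substr s t₂ ℓ ∧ substr s t₂ ℓ = substr s t₃ ℓ ∧
  ¬(s (t₁ - 1) = s (t₂ - 1) ∧ s (t₂ - 1) = s (t₃ - 1)) ∧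
  ¬(s (t₁ + (ℓ : ZMod G)) = s (t₂ + (ℓ : ZMod G)) ∧
      s (t₂ + (ℓ : ZMod G)) = s (t₃ + (ℓ : ZMod G)))

/-- The copy `s[t : t+ℓ-1]` is bridged by the set of reads `R` (given by their
starting positions, all reads having length `L`): some read extends strictly
beyond the copy on both sides. -/
def BridgedCopy {G : ℕ} (R : Finset (ZMod G)) (L : ℕ) (t : ZMod G) (ℓ : ℕ) : Prop :=
  ∃ p ∈ R, ∃ i : ℕ, 0 < i ∧ i + ℓ + 1 ≤ L ∧ t = p + (i : ZMod G)

/-- The read set `R` `k`-covers the circular genome: a read starts in every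
window of `k` consecutive positions. -/
def KCovers {G : ℕ} (R : Finset (ZMod G)) (k : ℕ) : Prop :=
  ∀ t : ZMod G, ∃ p ∈ R, ∃ j : ℕ, j < k ∧ p = t + (j : ZMod G)

/-- Two repeats (at positions `a₁,a₂`, length `ℓ`, and `b₁,b₂`, length `m`) are
linked with link length `link`, i.e. `a₂ < b₁ ≤ a₂ + ℓ + 1` and
`link = a₂ + ℓ + 1 - b₁`. -/
def LinkedRepeats {G : ℕ} (s : ZMod G → Sym) (ℓ m : ℕ) (a₁ a₂ b₁ b₂ : ZMod G)
    (link : ℕ) : Prop :=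
  IsRepeatAt s ℓ a₁ a₂ ∧ IsRepeatAt s m b₁ b₂ ∧
  ∃ d : ℕ, 1 ≤ d ∧ d ≤ ℓ + 1 ∧ b₁ = a₂ + (d : ZMod G) ∧ link = ℓ + 1 - d

/-! ### Directed multigraphs with edge multiplicities, Eulerian cycles -/

/-- The number of indices at which `a` occurs in the list `w`. -/
def countIn {α : Type} (w : List α) (a : α) : ℕ :=
  Nat.card {i : Fin w.length // w.get i = a}

/-- `w` is a (nonempty) closed walk with respect to source/target maps. -/
def ClosedChain {E V : Type} (src tgt : E → V) (w : List E) : Prop :=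
  w ≠ [] ∧ List.Chain' (fun e f => tgt e = src f) w ∧
    ∀ e f, w.getLast? = some e → w.head? = some f → tgt e = src f

/-- A directed multigraph: edges `E` between vertices `V`, each edge carrying a
multiplicity (number of parallel copies).  Walks are lists of edges, so that
parallel copies of the same edge are indistinguishable, i.e. walks are
automatically considered "up to edge multiplicity". -/
structure MultiGraph where
  V : Type
  E : Type
  src : E → V
  tgt : E → V
  mult : E → ℕ

/-- An Eulerian cycle of a multigraph: a closed walk traversing each edge
exactly as many times as its multiplicity. -/
def MultiGraph.IsEulerianCycle (M : MultiGraph) (w : List M.E) : Prop :=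
  ClosedChain M.src M.tgt w ∧ ∀ e : M.E, countIn w e = M.mult e

/-- The number of Eulerian cycles of a multigraph, distinct up to edge
multiplicity (automatic in this representation) and up to rotation (cycles
have no distinguished starting point). -/
def MultiGraph.ec (M : MultiGraph) : ℕ :=
  Nat.card (Quot (fun w w' : {w : List M.E // M.IsEulerianCycle w} =>
    ∃ n : ℕ, w'.val = w.val.rotate n))

/-- Out-degree of a vertex (counting parallel copies of edges). -/
def MultiGraph.outDeg (M : MultiGraph) (v : M.V) : ℕ :=
  Nat.card {p : M.E × ℕ // M.src p.1 = v ∧ p.2 < M.mult p.1}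

/-- In-degree of a vertex (counting parallel copies of edges). -/
def MultiGraph.inDeg (M : MultiGraph) (v : M.V) : ℕ :=
  Nat.card {p : M.E × ℕ // M.tgt p.1 = v ∧ p.2 < M.mult p.1}

/-- One-step adjacency along an edge of positive multiplicity. -/
def MultiGraph.Adj (M : MultiGraph) (u v : M.V) : Prop :=
  ∃ e, 0 < M.mult e ∧ M.src e = u ∧ M.tgt e = v

/-- Connectivity (on the vertices of positive degree) of a multigraph. -/
def MultiGraph.Connected (M : MultiGraph) : Prop :=
  ∀ u v : M.V, 0 < M.outDeg u + M.inDeg u → 0 < M.outDeg v + M.inDeg v →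
    Relation.ReflTransGen M.Adj u v

/-! ### The `k`-mer graph `B_k(s)` -/

/-- The `k`-mer graph `B_k(s)` of a circular sequence `s`: vertices are
`(k-1)`-mers, edges are `k`-mers, an edge `x` goes from its `(k-1)`-prefix to its
`(k-1)`-suffix, with multiplicity the number of occurrences of `x` in `s`.
(Strings that are not `k`-mers of `s` get multiplicity `0` and are irrelevant.) -/
def kmerGraph {G : ℕ} (s : ZMod G → Sym) (k : ℕ) : MultiGraph where
  V := Str
  E := Str
  src e := e.take (k - 1)
  tgt e := e.drop 1
  mult e := Nat.card {t : ZMod G // substr s t k = e}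

/-- The multiset `C_k(x)` of all length-`k` cyclic substrings (`k`-mer composition)
of a circular sequence `x` of positive length `n`. -/
def Ckmul {n : ℕ} (hn : 0 < n) (x : ZMod n → Sym) (k : ℕ) : Multiset Str :=
  haveI : NeZero n := ⟨hn.ne'⟩
  Multiset.map (fun t => substr x t k) Finset.univ.val

/-- The closed walk in the `k`-mer graph corresponding to the circular sequence
`x` itself: its `i`-th edge is the `k`-mer starting at position `i`. -/
def genomeWalk {G : ℕ} (x : ZMod G → Sym) (k : ℕ) : List Str :=
  (List.range G).map (fun i => substr x (i : ZMod G) k)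

/-- The list of first symbols of the edge labels along a walk (the string
spelled by a closed walk, read circularly). -/
def listHeads (w : List Str) : List Sym :=
  w.map (fun e => e.headD 0)

/-- The circular sequence determined by a list of symbols. -/
def circOf (l : List Sym) : ZMod l.length → Sym :=
  fun i => l.getD i.val 0

/-- The number of (cyclic) occurrences of the pattern `p` in the cyclic word `w`. -/
def cyclicOccCount {α : Type} (w p : List α) : ℕ :=
  Nat.card {i : Fin w.length // ∀ j : ℕ, j < p.length →
    w[(i.val + j) % w.length]? = p[j]?}

/-! ### Sequence graphs (Definition 2) -/

/-- A sequence graph of order `k` (Definition 2): a directed multigraph whose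
edges are labeled with `k`-mers and whose nodes are labeled with `(k-1)`-mers,
consistently. -/
structure SeqGraph (k : ℕ) where
  V : Type
  E : Type
  src : E → V
  tgt : E → V
  elabel : E → Str
  vlabel : V → Str
  elabel_length : ∀ e, (elabel e).length = k
  vlabel_length : ∀ v, (vlabel v).length = k - 1
  label_src : ∀ e, vlabel (src e) = (elabel e).take (k - 1)
  label_tgt : ∀ e, vlabel (tgt e) = (elabel e).drop 1

/-- `w` is a Chinese Postman cycle of the sequence graph `Γ` (a closed walk
traversing every edge at least once) that spells out the circular sequence
`s`, up to cyclic shift. -/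
def SeqGraph.CPSpells {k : ℕ} (Γ : SeqGraph k) {G : ℕ} (s : ZMod G → Sym)
    (w : List Γ.E) : Prop :=
  ClosedChain Γ.src Γ.tgt w ∧ (∀ e : Γ.E, e ∈ w) ∧ w.length = G ∧
    ∃ t₀ : ZMod G, ∀ (i : ℕ) (h : i < w.length),
      (Γ.elabel (w.get ⟨i, h⟩)).headD 0 = s (t₀ + (i : ZMod G))

/-- A sequence graph is sufficient for `s` (Definition 4) if some Chinese
Postman cycle spells out `s` up to cyclic shift. -/
def SeqGraph.Sufficient {k : ℕ} (Γ : SeqGraph k) {G : ℕ} (s : ZMod G → Sym) : Prop :=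
  ∃ w, Γ.CPSpells s w

/-- `G[s]`: the multigraph obtained from a sequence graph by assigning each edge
the multiplicity with which the given Chinese Postman cycle `w` traverses it. -/
def SeqGraph.toMG {k : ℕ} (Γ : SeqGraph k) (w : List Γ.E) : MultiGraph :=
  ⟨Γ.V, Γ.E, Γ.src, Γ.tgt, fun e => countIn w e⟩

/-- The cycle sequence graph of order `k` of a circular sequence `s`:
the directed cycle on `ZMod G` with edge `i → i+1` labeled `s[i : i+k-1]`. -/
def cycleSeqGraph {G : ℕ} (s : ZMod G → Sym) (k : ℕ) : SeqGraph k where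
  V := ZMod G
  E := ZMod G
  src i := i
  tgt i := i + 1
  elabel i := substr s i k
  vlabel i := substr s i (k - 1)
  elabel_length e := substr_length s e k
  vlabel_length v := substr_length s v (k - 1)
  label_src e := (substr_take s e k).symm
  label_tgt e := (substr_drop s e k).symm

/-! ### The setting of the assembly problem -/

/-- The data of an assembly problem: a circular genome `s` of length `G`, a set
of (error-free, length-`L`) reads given by their starting positions `R`, and
the minimum-overlap parameter `k` of the greedy merging algorithm. -/
structure Setup where
  G : ℕ
  s : ZMod G → Sym
  R : Finset (ZMod G)
  L : ℕ
  k : ℕ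

/-- Edge positions of the initial sequence graph of Algorithm 1: the `j`-th
`k`-mer edge of the read starting at `p` (`0 ≤ j ≤ L - k`). -/
def Setup.EdgePos (S : Setup) : Type :=
  {p : ZMod S.G × ℕ // p.1 ∈ S.R ∧ p.2 + S.k ≤ S.L}

/-- Node positions of the initial sequence graph of Algorithm 1. -/
def Setup.NodePos (S : Setup) : Type :=
  {p : ZMod S.G × ℕ // p.1 ∈ S.R ∧ p.2 + S.k ≤ S.L + 1}

/-- Source node of an edge position. -/
def Setup.esrc (S : Setup) (e : S.EdgePos) : S.NodePos :=
  ⟨e.val, e.prop.1, le_trans e.prop.2 (Nat.le_succ _)⟩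

/-- Target node of an edge position. -/
def Setup.etgt (S : Setup) (e : S.EdgePos) : S.NodePos :=
  ⟨(e.val.1, e.val.2 + 1), e.prop.1, by have := e.prop.2; omega⟩

/-- The `k`-mer label of an edge position. -/
def Setup.edgeLabel (S : Setup) (e : S.EdgePos) : Str :=
  substr S.s (e.val.1 + (e.val.2 : ZMod S.G)) S.k

/-- The genome position corresponding to an edge position of a read. -/
def Setup.pos (S : Setup) (e : S.EdgePos) : ZMod S.G :=
  e.val.1 + (e.val.2 : ZMod S.G)

/-- A state of Algorithm 1 is an equivalence relation (`Setoid`) on edge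
positions, recording which edges have been merged; the induced relation on
node positions merges the endpoints of merged edges. -/
def Setup.nodeRel (S : Setup) (σ : Setoid S.EdgePos) :
    S.NodePos → S.NodePos → Prop :=
  fun v v' => ∃ e e', σ.r e e' ∧
    ((v = S.esrc e ∧ v' = S.esrc e') ∨ (v = S.etgt e ∧ v' = S.etgt e'))

/-- The node equivalence induced by an edge equivalence. -/
def Setup.nodeSetoid (S : Setup) (σ : Setoid S.EdgePos) : Setoid S.NodePos :=
  EqvGen.setoid (S.nodeRel σ)

/-- Source map on merged (quotient) edges. -/
def Setup.qsrc (S : Setup) (σ : Setoid S.EdgePos) :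
    Quotient σ → Quotient (S.nodeSetoid σ) :=
  Quotient.lift (fun e => Quotient.mk (S.nodeSetoid σ) (S.esrc e))
    (fun e e' h => Quotient.sound (EqvGen.rel _ _ ⟨e, e', h, Or.inl ⟨rfl, rfl⟩⟩))

/-- Target map on merged (quotient) edges. -/
def Setup.qtgt (S : Setup) (σ : Setoid S.EdgePos) :
    Quotient σ → Quotient (S.nodeSetoid σ) :=
  Quotient.lift (fun e => Quotient.mk (S.nodeSetoid σ) (S.etgt e))
    (fun e e' h => Quotient.sound (EqvGen.rel _ _ ⟨e, e', h, Or.inr ⟨rfl, rfl⟩⟩))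

/-- Label of a merged edge (via a representative; in the states reached by the
algorithm all representatives carry the same label). -/
def Setup.classLabel (S : Setup) (σ : Setoid S.EdgePos) (c : Quotient σ) : Str :=
  S.edgeLabel (Quotient.out c)

/-- The string spelled by a path of merged edges (`st(p)` in the paper). -/
def Setup.spellWalk (S : Setup) (σ : Setoid S.EdgePos)
    (w : List (Quotient σ)) : Str :=
  (w.map fun c => (S.classLabel σ c).headD 0) ++
    (match w.getLast? with
      | none => []
      | some c => (S.classLabel σ c).drop 1)

/-- `x` is a current graph suffix: it is spelled by a path ending at a node of
out-degree zero. -/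
def Setup.IsGraphSuffix (S : Setup) (σ : Setoid S.EdgePos) (x : Str) : Prop :=
  ∃ w : List (Quotient σ), w ≠ [] ∧
    List.Chain' (fun c d => S.qtgt σ c = S.qsrc σ d) w ∧
    (∃ c, w.getLast? = some c ∧ ∀ d : Quotient σ, S.qsrc σ d ≠ S.qtgt σ c) ∧
    S.spellWalk σ w = x

/-- `x` is a current graph prefix: it is spelled by a path starting at a node of
in-degree zero. -/
def Setup.IsGraphPrefix (S : Setup) (σ : Setoid S.EdgePos) (x : Str) : Prop :=
  ∃ w : List (Quotient σ), w ≠ [] ∧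
    List.Chain' (fun c d => S.qtgt σ c = S.qsrc σ d) w ∧
    (∃ c, w.head? = some c ∧ ∀ d : Quotient σ, S.qtgt σ d ≠ S.qsrc σ c) ∧
    S.spellWalk σ w = x

/-- The string `x` occurs in the read starting at `r` at (0-based) offset `a`. -/
def Setup.OccursAt (S : Setup) (x : Str) (r : ZMod S.G) (a : ℕ) : Prop :=
  r ∈ S.R ∧ a + x.length ≤ S.L ∧ substr S.s (r + (a : ZMod S.G)) x.length = x

/-- `x` appears in more than one read. -/
def Setup.InMultipleReads (S : Setup) (x : Str) : Prop :=
  ∃ r a r' b, r ≠ r' ∧ S.OccursAt x r a ∧ S.OccursAt x r' b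

/-- At state `σ`, in the iteration treating matches of length `ℓ`, the algorithm
merges the occurrence of `x` at offset `a` of read `r` with the occurrence of
`x` at offset `b` of read `r'`. -/
def Setup.MergeOcc (S : Setup) (σ : Setoid S.EdgePos) (ℓ : ℕ) (x : Str)
    (r : ZMod S.G) (a : ℕ) (r' : ZMod S.G) (b : ℕ) : Prop :=
  x.length = ℓ ∧ S.k ≤ ℓ ∧ (S.IsGraphPrefix σ x ∨ S.IsGraphSuffix σ x) ∧
    S.InMultipleReads x ∧ S.OccursAt x r a ∧ S.OccursAt x r' b

/-- The pairs of edge positions identified during the iteration of Algorithm 1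
treating matches of length `ℓ`, from state `σ`. -/
def Setup.mergeRel (S : Setup) (σ : Setoid S.EdgePos) (ℓ : ℕ) :
    S.EdgePos → S.EdgePos → Prop :=
  fun e e' => ∃ x r a r' b j, S.MergeOcc σ ℓ x r a r' b ∧ j + S.k ≤ ℓ ∧
    e.val = (r, a + j) ∧ e'.val = (r', b + j)

/-- One iteration of Algorithm 1 (treating matches of length `ℓ`). -/
def Setup.stepDown (S : Setup) (σ : Setoid S.EdgePos) (ℓ : ℕ) :
    Setoid S.EdgePos :=
  σ ⊔ EqvGen.setoid (S.mergeRel σ ℓ)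

/-- The state of Algorithm 1 after `m` iterations (which have treated match
lengths `L, L-1, ..., L-m+1`); the initial state is the discrete equivalence. -/
def Setup.stateAfter (S : Setup) : ℕ → Setoid S.EdgePos
  | 0 => ⊥
  | m + 1 => S.stepDown (S.stateAfter m) (S.L - m)

/-- The final state of Algorithm 1 (after treating match lengths `L` down to `k`). -/
def Setup.finalState (S : Setup) : Setoid S.EdgePos :=
  S.stateAfter (S.L - S.k + 1)

/-- `w` is a Chinese Postman cycle of the sequence graph determined by the
state `σ` which spells out the genome `s` up to cyclic shift. -/
def Setup.CPSpells (S : Setup) (σ : Setoid S.EdgePos)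
    (w : List (Quotient σ)) : Prop :=
  ClosedChain (S.qsrc σ) (S.qtgt σ) w ∧ (∀ c : Quotient σ, c ∈ w) ∧
    w.length = S.G ∧
    ∃ t₀ : ZMod S.G, ∀ (i : ℕ) (h : i < w.length),
      (S.classLabel σ (w.get ⟨i, h⟩)).headD 0 = S.s (t₀ + (i : ZMod S.G))

/-- The sequence graph determined by the state `σ` is sufficient for the
assembly of `s` (Definition 4). -/
def Setup.Sufficient (S : Setup) (σ : Setoid S.EdgePos) : Prop :=
  ∃ w, S.CPSpells σ w

/-- `G[s]` for the sequence graph determined by the state `σ` and a Chinese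
Postman cycle `w` corresponding to `s`. -/
def Setup.stateMG (S : Setup) (σ : Setoid S.EdgePos)
    (w : List (Quotient σ)) : MultiGraph :=
  ⟨Quotient (S.nodeSetoid σ), Quotient σ, S.qsrc σ, S.qtgt σ, fun c => countIn w c⟩

/-! ### Hypotheses of Theorems 1 and 2 -/

/-- Every triple repeat of `s` is either all-bridged or all-unbridged by `R`. -/
def Setup.TripleOK (S : Setup) : Prop :=
  ∀ ℓ (t₁ t₂ t₃ : ZMod S.G), IsTripleRepeatAt S.s ℓ t₁ t₂ t₃ →
    ((BridgedCopy S.R S.L t₁ ℓ ∧ BridgedCopy S.R S.L t₂ ℓ ∧ BridgedCopy S.R S.L t₃ ℓ) ∨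
     (¬BridgedCopy S.R S.L t₁ ℓ ∧ ¬BridgedCopy S.R S.L t₂ ℓ ∧ ¬BridgedCopy S.R S.L t₃ ℓ))

/-- Every repeat of `s` of length at most `q` is doubly-bridged by `R`. -/
def Setup.ShortRepeatsDB (S : Setup) (q : ℕ) : Prop :=
  ∀ ℓ (t₁ t₂ : ZMod S.G), ℓ ≤ q → IsRepeatAt S.s ℓ t₁ t₂ →
    BridgedCopy S.R S.L t₁ ℓ ∧ BridgedCopy S.R S.L t₂ ℓ

/-- For every pair of linked repeats with link length `link` satisfying
`k - 1 ≤ link ≤ q`, at least one of the two repeats is doubly-bridged. -/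
def Setup.LinkedOK (S : Setup) (q : ℕ) : Prop :=
  ∀ ℓ m (a₁ a₂ b₁ b₂ : ZMod S.G) (link : ℕ),
    LinkedRepeats S.s ℓ m a₁ a₂ b₁ b₂ link → S.k - 1 ≤ link → link ≤ q →
    ((BridgedCopy S.R S.L a₁ ℓ ∧ BridgedCopy S.R S.L a₂ ℓ) ∨
     (BridgedCopy S.R S.L b₁ m ∧ BridgedCopy S.R S.L b₂ m))

/-! ### The contracted graph `G_{U(R)}` -/

/-- The repeat with copies at `t₁, t₂` of length `m` is a maximal repeat of `s`
that is **not** doubly-bridged by `R`, i.e. it belongs to `U(R)`. -/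
def Setup.InU (S : Setup) (m : ℕ) (t₁ t₂ : ZMod S.G) : Prop :=
  IsRepeatAt S.s m t₁ t₂ ∧
    ¬(BridgedCopy S.R S.L t₁ m ∧ BridgedCopy S.R S.L t₂ m)

/-- The generating relation contracting corresponding **edges** of the two
paths of each repeat in `U(R)` in the cycle sequence graph of order `k`. -/
def Setup.uEdgeRel (S : Setup) : ZMod S.G → ZMod S.G → Prop :=
  fun i j => ∃ (m : ℕ) (t₁ t₂ : ZMod S.G) (d : ℕ), S.InU m t₁ t₂ ∧ d + S.k < m ∧
    i = t₁ + (d : ZMod S.G) ∧ j = t₂ + (d : ZMod S.G)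

/-- The edge identification of the contracted graph `G_{U(R)}`. -/
def Setup.uEdgeSetoid (S : Setup) : Setoid (ZMod S.G) :=
  EqvGen.setoid S.uEdgeRel

/-- The generating relation contracting corresponding **nodes** of the two
paths of each repeat in `U(R)` in the cycle sequence graph of order `k`. -/
def Setup.uNodeRel (S : Setup) : ZMod S.G → ZMod S.G → Prop :=
  fun i j => ∃ (m : ℕ) (t₁ t₂ : ZMod S.G) (d : ℕ), S.InU m t₁ t₂ ∧ d + S.k ≤ m ∧
    i = t₁ + (d : ZMod S.G) ∧ j = t₂ + (d : ZMod S.G)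

/-- The node identification of the contracted graph `G_{U(R)}`. -/
def Setup.uNodeSetoid (S : Setup) : Setoid (ZMod S.G) :=
  EqvGen.setoid S.uNodeRel

theorem Setup.uEdge_imp_uNode (S : Setup) :
    ∀ i j : ZMod S.G, EqvGen S.uEdgeRel i j → EqvGen S.uNodeRel i j := by
  intro i j h
  induction h with
  | rel a b hab =>
      obtain ⟨m, t₁, t₂, d, h1, h2, h3, h4⟩ := hab
      exact EqvGen.rel _ _ ⟨m, t₁, t₂, d, h1, by omega, h3, h4⟩
  | refl a => exact EqvGen.refl a
  | symm a b _ ih => exact EqvGen.symm _ _ ih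
  | trans a b c _ _ ih1 ih2 => exact EqvGen.trans _ _ _ ih1 ih2

theorem Setup.uEdge_imp_uNode_succ (S : Setup) :
    ∀ i j : ZMod S.G, EqvGen S.uEdgeRel i j → EqvGen S.uNodeRel (i + 1) (j + 1) := by
  intro i j h
  induction h with
  | rel a b hab =>
      obtain ⟨m, t₁, t₂, d, h1, h2, h3, h4⟩ := hab
      refine EqvGen.rel _ _ ⟨m, t₁, t₂, d + 1, h1, by omega, ?_, ?_⟩
      · rw [h3]; push_cast; ring
      · rw [h4]; push_cast; ring
  | refl a => exact EqvGen.refl _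
  | symm a b _ ih => exact EqvGen.symm _ _ ih
  | trans a b c _ _ ih1 ih2 => exact EqvGen.trans _ _ _ ih1 ih2

/-- Source map of the contracted graph `G_{U(R)}`. -/
def Setup.qsrcU (S : Setup) : Quotient S.uEdgeSetoid → Quotient S.uNodeSetoid :=
  Quotient.lift (fun i => Quotient.mk S.uNodeSetoid i)
    (fun i j h => Quotient.sound (S.uEdge_imp_uNode i j h))

/-- Target map of the contracted graph `G_{U(R)}`. -/
def Setup.qtgtU (S : Setup) : Quotient S.uEdgeSetoid → Quotient S.uNodeSetoid :=
  Quotient.lift (fun i => Quotient.mk S.uNodeSetoid (i + 1))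
    (fun i j h => Quotient.sound (S.uEdge_imp_uNode_succ i j h))

/-- Out-degree of a node of `G_{U(R)}`. -/
def Setup.uOutDeg (S : Setup) (v : Quotient S.uNodeSetoid) : ℕ :=
  Nat.card {c : Quotient S.uEdgeSetoid // S.qsrcU c = v}

/-- In-degree of a node of `G_{U(R)}`. -/
def Setup.uInDeg (S : Setup) (v : Quotient S.uNodeSetoid) : ℕ :=
  Nat.card {c : Quotient S.uEdgeSetoid // S.qtgtU c = v}

/-- The `k`-mer label of an edge of `G_{U(R)}` (via a representative). -/
def Setup.uClassLabel (S : Setup) (c : Quotient S.uEdgeSetoid) : Str :=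
  substr S.s (Quotient.out c) S.k

/-- `w` is a Chinese Postman cycle of `G_{U(R)}` spelling the genome `s`
up to cyclic shift. -/
def Setup.uCPSpells (S : Setup) (w : List (Quotient S.uEdgeSetoid)) : Prop :=
  ClosedChain S.qsrcU S.qtgtU w ∧ (∀ c : Quotient S.uEdgeSetoid, c ∈ w) ∧
    w.length = S.G ∧
    ∃ t₀ : ZMod S.G, ∀ (i : ℕ) (h : i < w.length),
      (S.uClassLabel (w.get ⟨i, h⟩)).headD 0 = S.s (t₀ + (i : ZMod S.G))

/-- `G_{U(R)}[s]` for a Chinese Postman cycle `w` corresponding to `s`. -/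
def Setup.uMG (S : Setup) (w : List (Quotient S.uEdgeSetoid)) : MultiGraph :=
  ⟨Quotient S.uNodeSetoid, Quotient S.uEdgeSetoid, S.qsrcU, S.qtgtU,
    fun c => countIn w c⟩

/-- The list of first symbols of the edge labels along a walk of `G_{U(R)}`. -/
def Setup.uHeads (S : Setup) (w : List (Quotient S.uEdgeSetoid)) : List Sym :=
  w.map (fun c => (S.uClassLabel c).headD 0)

/-- The map sending an edge class of the algorithm's graph to the edge class of
`G_{U(R)}` of (a representative of) its genome position. -/
def Setup.posQ (S : Setup) (σ : Setoid S.EdgePos) (c : Quotient σ) :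
    Quotient S.uEdgeSetoid :=
  Quotient.mk S.uEdgeSetoid (S.pos (Quotient.out c))

/-! ### Multigraphs given by a multiplicity function, and the BEST theorem -/

/-- Out-degree in a multigraph given by a multiplicity function `m` on ordered
pairs of vertices. -/
def outDegF {V : Type} [Fintype V] (m : V → V → ℕ) (v : V) : ℕ := ∑ u : V, m v u

/-- In-degree in a multigraph given by a multiplicity function. -/
def inDegF {V : Type} [Fintype V] (m : V → V → ℕ) (v : V) : ℕ := ∑ u : V, m u v

/-- The parallel edge copies of the multigraph with multiplicity function `m`:
the `c`-th copy of the edge from `u` to `v`, for `c < m u v`. -/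
def EdgeCopy {V : Type} (m : V → V → ℕ) : Type :=
  {t : V × V × ℕ // t.2.2 < m t.1 t.2.1}

/-- Source of an edge copy. -/
def EdgeCopy.src {V : Type} {m : V → V → ℕ} (e : EdgeCopy m) : V := e.val.1

/-- Target of an edge copy. -/
def EdgeCopy.tgt {V : Type} {m : V → V → ℕ} (e : EdgeCopy m) : V := e.val.2.1

/-- An Eulerian circuit: a closed walk traversing every edge copy exactly once
(parallel copies counted as distinct). -/
def IsEulerCircuit {V : Type} (m : V → V → ℕ) (w : List (EdgeCopy m)) : Prop :=
  ClosedChain EdgeCopy.src EdgeCopy.tgt w ∧ ∀ e : EdgeCopy m, countIn w e = 1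

/-- Forget the copy indices along a walk, leaving the sequence of traversed
ordered pairs of vertices. -/
def projEdges {V : Type} {m : V → V → ℕ} (w : List (EdgeCopy m)) : List (V × V) :=
  w.map (fun e => (e.val.1, e.val.2.1))

/-- Connectivity on the vertices of positive degree. -/
def FConnected {V : Type} [Fintype V] (m : V → V → ℕ) : Prop :=
  ∀ u v : V, 0 < outDegF m u + inDegF m u → 0 < outDegF m v + inDegF m v →
    Relation.ReflTransGen (fun a b => 0 < m a b) u v

/-- The vertex map following the chosen out-edges of a candidate arborescence. -/
def arbStep {V : Type} {m : V → V → ℕ} (t : V → Option (EdgeCopy m)) (v : V) : V :=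
  match t v with
  | none => v
  | some e => e.tgt

/-- An arborescence of the multigraph `m` rooted at `r` (directed toward the
root, spanning the vertices of positive degree): every vertex of positive
degree other than `r` has exactly one chosen out-edge copy, and following the
chosen edges leads to `r`. -/
def IsArborescence {V : Type} [Fintype V] (m : V → V → ℕ) (r : V)
    (t : V → Option (EdgeCopy m)) : Prop :=
  (∀ v, t v = none ↔ (v = r ∨ outDegF m v + inDegF m v = 0)) ∧
  (∀ v e, t v = some e → e.src = v) ∧
  (∀ v, 0 < outDegF m v + inDegF m v → ∃ n : ℕ, (arbStep t)^[n] v = r)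

/-- `T_G`: the number of arborescences rooted at `r` (parallel copies distinct). -/
def numArbor {V : Type} [Fintype V] (m : V → V → ℕ) (r : V) : ℕ :=
  Nat.card {t : V → Option (EdgeCopy m) // IsArborescence m r t}

/-- Eulerian cycles of the multigraph `m` up to rotation (i.e. with no
distinguished starting point), with parallel copies still distinct. -/
def RotClasses {V : Type} (m : V → V → ℕ) : Type :=
  Quot (fun w w' : {w : List (EdgeCopy m) // IsEulerCircuit m w} =>
    ∃ n : ℕ, w'.val = w.val.rotate n)

/-- Two rotation classes of Eulerian cycles are identified up to edge
multiplicity if they traverse the same cyclic sequence of ordered vertex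
pairs, i.e. one is obtained from the other by permuting the traversals of
parallel edge copies (and rotating). -/
def SameProjClass {V : Type} {m : V → V → ℕ} (qc qc' : RotClasses m) : Prop :=
  ∃ w w' : {w : List (EdgeCopy m) // IsEulerCircuit m w},
    Quot.mk _ w = qc ∧ Quot.mk _ w' = qc' ∧
    ∃ n : ℕ, projEdges w'.val = (projEdges w.val).rotate n

/-- The number of Eulerian cycles of the multigraph `m`, distinct up to edge
multiplicity (and up to rotation). -/
def ecF {V : Type} (m : V → V → ℕ) : ℕ :=
  Nat.card (Quot (fun w w' : {w : List (EdgeCopy m) // IsEulerCircuit m w} =>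
    ∃ n : ℕ, projEdges w'.val = (projEdges w.val).rotate n))

/-!
An Eulerian cycle of `B_k(s)` is a cyclic list of `k`-mers in which each one overlaps the next
in `k - 1` symbols, so the `j`-th symbol of an edge is the first symbol of the edge `j` steps
later. Hence the cycle is exactly the list of cyclic `k`-windows of the circular sequence spelled
by the first symbols of its edges, while the `k`-windows of any circular sequence form a closed
walk. Such a walk traverses every `k`-mer as often as `B_k(s)` prescribes precisely when the
sequence has the `k`-mer composition of `s`, and for `k ≥ 1` a sequence is recovered from its
windows. Cyclic shifts of sequences correspond to rotations of cycles, which gives the bijection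
of the classes.
-/

theorem count_map_univ_val {ι α : Type} [Fintype ι] [DecidableEq α] (f : ι → α) (a : α) :
    (Finset.univ.val.map f).count a = Nat.card {i // f i = a} := by
  rw [Multiset.count_map, Nat.card_eq_fintype_card, Fintype.card_subtype, Finset.card,
    Finset.filter_val]
  exact congrArg Multiset.card (Multiset.filter_congr fun _ _ => eq_comm)

theorem countIn_eq_count {α : Type} [DecidableEq α] (w : List α) (a : α) :
    countIn w a = w.count a := by
  rw [countIn, ← count_map_univ_val, Fin.univ_val_map, List.ofFn_get, Multiset.coe_count]

theorem coe_map_range_natCast (n : ℕ) [NeZero n] :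
    (((List.range n).map (Nat.cast : ℕ → ZMod n) : List (ZMod n)) : Multiset (ZMod n)) =
      Finset.univ.val := by
  refine (Multiset.Nodup.ext ?_ Finset.univ.nodup).mpr fun t => ?_
  · refine Multiset.coe_nodup.mpr ((List.nodup_range).map_on fun i hi j hj hij => ?_)
    rw [List.mem_range] at hi hj
    simpa [ZMod.val_cast_of_lt hi, ZMod.val_cast_of_lt hj] using congrArg ZMod.val hij
  · simp only [Multiset.mem_coe, List.mem_map, List.mem_range, Finset.mem_val, Finset.mem_univ,
      iff_true]
    exact ⟨t.val, t.val_lt, ZMod.natCast_zmod_val t⟩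

theorem closedChain_iff_getElem {E V : Type} {src tgt : E → V} {w : List E} :
    ClosedChain src tgt w ↔ ∃ hw : 0 < w.length, ∀ i (hi : i < w.length),
      tgt w[i] = src (w[(i + 1) % w.length]'(Nat.mod_lt _ hw)) := by
  show _ ∧ List.IsChain _ w ∧ _ ↔ _
  rw [List.isChain_iff_getElem, List.getLast?_eq_getElem?, List.head?_eq_getElem?,
    ← List.length_pos_iff]
  constructor
  · rintro ⟨hw, hchain, hclose⟩
    refine ⟨hw, fun i hi => ?_⟩
    rcases Nat.lt_or_ge (i + 1) w.length with h | h
    · simpa [Nat.mod_eq_of_lt h] using hchain i h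
    · obtain rfl : i = w.length - 1 := by omega
      simpa [Nat.sub_add_cancel hw] using hclose _ _ (List.getElem?_eq_getElem hi)
        (List.getElem?_eq_getElem hw)
  · rintro ⟨hw, hstep⟩
    refine ⟨hw, fun i hi => by simpa [Nat.mod_eq_of_lt hi] using hstep i (by omega), ?_⟩
    intro e f he hf
    rw [List.getElem?_eq_getElem (by omega), Option.some_inj] at he
    rw [List.getElem?_eq_getElem hw, Option.some_inj] at hf
    subst he hf
    simpa [Nat.sub_add_cancel hw] using hstep (w.length - 1) (by omega)

theorem count_Ckmul {n : ℕ} (hn : 0 < n) (x : ZMod n → Sym) (k : ℕ) (e : Str) :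
    (Ckmul hn x k).count e = Nat.card {t // substr x t k = e} := by
  have : NeZero n := ⟨hn.ne'⟩
  exact count_map_univ_val _ e

theorem card_Ckmul {n : ℕ} (hn : 0 < n) (x : ZMod n → Sym) (k : ℕ) :
    Multiset.card (Ckmul hn x k) = n := by
  have : NeZero n := ⟨hn.ne'⟩
  rw [Ckmul, Multiset.card_map, Finset.card_val, Finset.card_univ, ZMod.card]

theorem genomeWalk_eq {n : ℕ} (x : ZMod n → Sym) (k : ℕ) :
    genomeWalk x k = ((List.range n).map (Nat.cast : ℕ → ZMod n)).map (substr x · k) := by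
  rw [← List.flatMap_pure_eq_map Nat.cast]
  rfl

@[simp] theorem length_genomeWalk {n : ℕ} (x : ZMod n → Sym) (k : ℕ) :
    (genomeWalk x k).length = n := by
  simp [genomeWalk_eq]

@[simp] theorem getElem_genomeWalk {n : ℕ} (x : ZMod n → Sym) (k i : ℕ)
    (hi : i < (genomeWalk x k).length) :
    (genomeWalk x k)[i] = substr x i k := by
  simp [genomeWalk_eq]

theorem coe_genomeWalk {n : ℕ} (hn : 0 < n) (x : ZMod n → Sym) (k : ℕ) :
    (genomeWalk x k : Multiset Str) = Ckmul hn x k := by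
  have : NeZero n := ⟨hn.ne'⟩
  rw [genomeWalk_eq, ← Multiset.map_coe, coe_map_range_natCast, Ckmul]

theorem closedChain_genomeWalk {n : ℕ} (hn : 0 < n) (x : ZMod n → Sym) (k : ℕ) :
    ClosedChain (fun e : Str => e.take (k - 1)) (fun e => e.drop 1) (genomeWalk x k) := by
  refine closedChain_iff_getElem.mpr ⟨(length_genomeWalk x k).symm ▸ hn, fun i hi => ?_⟩
  rw [getElem_genomeWalk, getElem_genomeWalk, substr_drop, substr_take, length_genomeWalk,
    ZMod.natCast_mod, Nat.cast_add_one]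

theorem genomeWalk_shift {n : ℕ} [NeZero n] (x : ZMod n → Sym) (k : ℕ) (r : ZMod n) :
    genomeWalk (fun t => x (t + r)) k = (genomeWalk x k).rotate r.val := by
  refine List.ext_getElem (by simp) fun i _ _ => ?_
  simp only [List.getElem_rotate, getElem_genomeWalk, length_genomeWalk, substr,
    ZMod.natCast_mod, Nat.cast_add, ZMod.natCast_zmod_val]
  congr 1
  funext j
  rw [add_right_comm]

/-- `circOf l` is `cyclicSeq l.length l`; a separate length parameter avoids transporting
sequences along equalities `l.length = n`. -/
def cyclicSeq (n : ℕ) (l : List Sym) : ZMod n → Sym :=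
  fun t => l.getD t.val 0

theorem cyclicSeq_rotate {n : ℕ} [NeZero n] {l : List Sym} (hl : l.length = n) (m : ℕ) :
    cyclicSeq n (l.rotate m) = fun t => cyclicSeq n l (t + m) := by
  funext t
  have ht : t.val < l.length := hl ▸ t.val_lt
  simp only [cyclicSeq, List.getD_eq_getElem?_getD, List.getElem?_rotate ht, ZMod.val_add,
    ZMod.val_natCast, Nat.add_mod_mod, hl]

theorem cyclicSeq_listHeads_genomeWalk {n : ℕ} [NeZero n] {k : ℕ} (hk : 0 < k)
    (x : ZMod n → Sym) : cyclicSeq n (listHeads (genomeWalk x k)) = x := by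
  funext t
  have ht : t.val < (genomeWalk x k).length := (length_genomeWalk x k).symm ▸ t.val_lt
  rw [cyclicSeq, listHeads, List.getD_eq_getElem _ _ (by simpa using ht), List.getElem_map,
    getElem_genomeWalk, ZMod.natCast_zmod_val, List.headD_eq_head?, List.head?_eq_getElem?,
    List.getElem?_eq_getElem (by rwa [substr_length]), substr_getElem, Option.getD_some,
    Nat.cast_zero, add_zero]

theorem exists_shift_iff_exists_rotate_genomeWalk {n k : ℕ} [NeZero n] (hk : 0 < k)
    (x x' : ZMod n → Sym) :
    (∃ r : ZMod n, ∀ i, x' i = x (i + r)) ↔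
      ∃ m : ℕ, genomeWalk x' k = (genomeWalk x k).rotate m := by
  constructor
  · rintro ⟨r, hr⟩
    exact ⟨r.val, by rw [← genomeWalk_shift, ← funext hr]⟩
  · rintro ⟨m, hm⟩
    refine ⟨m, congrFun ?_⟩
    rw [← cyclicSeq_listHeads_genomeWalk hk x', hm, ← List.rotate_mod, length_genomeWalk,
      ← ZMod.val_natCast, ← genomeWalk_shift, cyclicSeq_listHeads_genomeWalk hk]

theorem getD_eq_headD_of_closedChain {k : ℕ} {w : List Str}
    (hw : ClosedChain (fun e : Str => e.take (k - 1)) (fun e => e.drop 1) w)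
    {j : ℕ} (hj : j < k) (i : ℕ) (hi : i < w.length) :
    w[i].getD j 0 = (w[(i + j) % w.length]'(Nat.mod_lt _ (by omega))).headD 0 := by
  obtain ⟨hpos, hstep⟩ := closedChain_iff_getElem.mp hw
  induction j generalizing i with
  | zero => simp [Nat.mod_eq_of_lt hi, List.head?_eq_getElem?, List.getD_eq_getElem?_getD]
  | succ j ih =>
    have hi' := Nat.mod_lt (i + 1) hpos
    calc w[i].getD (j + 1) 0 = (w[i].drop 1).getD j 0 := by
          simp [List.getD_eq_getElem?_getD]
      _ = (w[(i + 1) % w.length].take (k - 1)).getD j 0 := by rw [hstep i hi]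
      _ = w[(i + 1) % w.length].getD j 0 := by
          simp [List.getD_eq_getElem?_getD, show j < k - 1 by omega]
      _ = _ := by
          rw [ih (by omega) _ hi']
          simp only [Nat.mod_add_mod, Nat.add_right_comm i 1 j, Nat.add_assoc]

theorem genomeWalk_cyclicSeq_listHeads {k n : ℕ} {w : List Str}
    (hw : ClosedChain (fun e : Str => e.take (k - 1)) (fun e => e.drop 1) w)
    (hlen : ∀ e ∈ w, e.length = k) (hn : w.length = n) :
    genomeWalk (cyclicSeq n (listHeads w)) k = w := by
  subst hn
  have hpos : 0 < w.length := (closedChain_iff_getElem.mp hw).1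
  refine List.ext_getElem (by simp) fun i _ hi => ?_
  rw [getElem_genomeWalk]
  refine List.ext_getElem (by rw [substr_length, hlen _ (List.getElem_mem hi)])
    fun j hj _ => ?_
  rw [substr_length] at hj
  have hij := Nat.mod_lt (i + j) hpos
  rw [substr_getElem, cyclicSeq, ← Nat.cast_add, ZMod.val_natCast, listHeads,
    List.getD_eq_getElem _ _ (by simpa using hij), List.getElem_map,
    ← getD_eq_headD_of_closedChain hw hj i hi, List.getD_eq_getElem]

section EulerianCycle

variable {G : ℕ} {s : ZMod G → Sym} {k : ℕ}

theorem isEulerianCycle_kmerGraph_iff (hG : 0 < G) {w : List Str} :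
    (kmerGraph s k).IsEulerianCycle w ↔
      ClosedChain (fun e : Str => e.take (k - 1)) (fun e => e.drop 1) w ∧
        (w : Multiset Str) = Ckmul hG s k := by
  show (_ ∧ ∀ e : Str, countIn w e = Nat.card {t // substr s t k = e}) ↔ _
  refine and_congr Iff.rfl ?_
  rw [Multiset.ext]
  exact forall_congr' fun e => by rw [Multiset.coe_count, count_Ckmul, countIn_eq_count]

theorem isEulerianCycle_genomeWalk (hG : 0 < G) {n : ℕ} (hn : 0 < n) {x : ZMod n → Sym}
    (hx : Ckmul hn x k = Ckmul hG s k) : (kmerGraph s k).IsEulerianCycle (genomeWalk x k) :=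
  (isEulerianCycle_kmerGraph_iff hG).mpr
    ⟨closedChain_genomeWalk hn x k, (coe_genomeWalk hn x k).trans hx⟩

theorem length_of_isEulerianCycle (hG : 0 < G) {w : List Str}
    (hw : (kmerGraph s k).IsEulerianCycle w) : w.length = G := by
  simpa [card_Ckmul] using congrArg Multiset.card ((isEulerianCycle_kmerGraph_iff hG).mp hw).2

theorem genomeWalk_cyclicSeq_of_isEulerianCycle (hG : 0 < G) {w : List Str}
    (hw : (kmerGraph s k).IsEulerianCycle w) {n : ℕ} (hn : w.length = n) :
    genomeWalk (cyclicSeq n (listHeads w)) k = w := by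
  obtain ⟨hchain, hcomp⟩ := (isEulerianCycle_kmerGraph_iff hG).mp hw
  refine genomeWalk_cyclicSeq_listHeads hchain (fun e he => ?_) hn
  obtain ⟨t, -, rfl⟩ := Multiset.mem_map.mp (hcomp ▸ Multiset.mem_coe.mpr he)
  exact substr_length s t k

theorem Ckmul_cyclicSeq_of_isEulerianCycle (hG : 0 < G) {w : List Str}
    (hw : (kmerGraph s k).IsEulerianCycle w) {n : ℕ} (hn : 0 < n) (hlen : w.length = n) :
    Ckmul hn (cyclicSeq n (listHeads w)) k = Ckmul hG s k := by
  rw [← coe_genomeWalk hn, genomeWalk_cyclicSeq_of_isEulerianCycle hG hw hlen,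
    ((isEulerianCycle_kmerGraph_iff hG).mp hw).2]

theorem eq_rotate_of_listHeads_eq_rotate (hG : 0 < G) {w w' : List Str}
    (hw : (kmerGraph s k).IsEulerianCycle w) (hw' : (kmerGraph s k).IsEulerianCycle w')
    {m : ℕ} (h : listHeads w' = (listHeads w).rotate m) : w' = w.rotate m := by
  have : NeZero G := ⟨hG.ne'⟩
  have hlen := length_of_isEulerianCycle hG hw
  calc w' = genomeWalk (cyclicSeq G (listHeads w')) k :=
        (genomeWalk_cyclicSeq_of_isEulerianCycle hG hw' (length_of_isEulerianCycle hG hw')).symm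
    _ = genomeWalk (fun t : ZMod G => cyclicSeq G (listHeads w) (t + m)) k := by
        rw [h, cyclicSeq_rotate (by simpa [listHeads] using hlen)]
    _ = (genomeWalk (cyclicSeq G (listHeads w)) k).rotate (m : ZMod G).val :=
        genomeWalk_shift _ k _
    _ = w.rotate m := by
        rw [genomeWalk_cyclicSeq_of_isEulerianCycle hG hw hlen, ZMod.val_natCast, ← hlen,
          List.rotate_mod]

variable (s) in
def genomeWalkEquiv (hG : 0 < G) (hk : 0 < k) :
    {x : ZMod G → Sym // Ckmul hG x k = Ckmul hG s k} ≃
      {w : List Str // (kmerGraph s k).IsEulerianCycle w} :=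
  have : NeZero G := ⟨hG.ne'⟩
  { toFun x := ⟨genomeWalk x.1 k, isEulerianCycle_genomeWalk hG hG x.2⟩
    invFun w := ⟨cyclicSeq G (listHeads w.1), Ckmul_cyclicSeq_of_isEulerianCycle hG w.2 hG
      (length_of_isEulerianCycle hG w.2)⟩
    left_inv x := Subtype.ext (cyclicSeq_listHeads_genomeWalk hk x.1)
    right_inv w := Subtype.ext
      (genomeWalk_cyclicSeq_of_isEulerianCycle hG w.2 (length_of_isEulerianCycle hG w.2)) }

end EulerianCycle

/-- Every circular sequence `x` with `C_k(x) = C_k(s)` corresponds to an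
Eulerian cycle of `B_k(s)`; every Eulerian cycle of `B_k(s)` spells a circular
sequence `x` with `C_k(x) = C_k(s)`; two Eulerian cycles distinct up to edge
multiplicity spell distinct circular sequences; consequently the number of
circular sequences (up to cyclic shift) with the `k`-mer composition of `s`
equals `ec(B_k(s))`. -/
theorem kmer_graph_cycles_biject_sequences {G : ℕ} (hG : 0 < G)
    (s : ZMod G → Sym) (k : ℕ) (hk : 2 ≤ k) :
    (∀ (G' : ℕ) (hG' : 0 < G') (x : ZMod G' → Sym),
        Ckmul hG' x k = Ckmul hG s k →
        (kmerGraph s k).IsEulerianCycle (genomeWalk x k)) ∧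
    (∀ w : List Str, (kmerGraph s k).IsEulerianCycle w →
        ∀ hw : 0 < (listHeads w).length,
          Ckmul hw (circOf (listHeads w)) k = Ckmul hG s k) ∧
    (∀ w w' : List Str, (kmerGraph s k).IsEulerianCycle w →
        (kmerGraph s k).IsEulerianCycle w' →
        ¬(∃ n : ℕ, w' = w.rotate n) →
        ¬(∃ n : ℕ, listHeads w' = (listHeads w).rotate n)) ∧
    (Nat.card (Quot (fun x x' : {x : ZMod G → Sym // Ckmul hG x k = Ckmul hG s k} =>
        ∃ r : ZMod G, ∀ i : ZMod G, x'.val i = x.val (i + r))) =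
      (kmerGraph s k).ec) := by
  have : NeZero G := ⟨hG.ne'⟩
  have hk₀ : 0 < k := by omega
  refine ⟨fun G' hG' x hx => isEulerianCycle_genomeWalk hG hG' hx,
    fun w hw hw0 => Ckmul_cyclicSeq_of_isEulerianCycle hG hw hw0 (List.length_map _).symm,
    fun w w' hw hw' hne ⟨m, hm⟩ => hne ⟨m, eq_rotate_of_listHeads_eq_rotate hG hw hw' hm⟩,
    Nat.card_congr (Quot.congr (genomeWalkEquiv s hG hk₀) fun x x' =>
      exists_shift_iff_exists_rotate_genomeWalk hk₀ x.1 x'.1)⟩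

end

end DNAAssembly
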